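/- Let β₅ = (7 − 3√3)/2. For every x₁ ∈ [β₅, 1], the number h = 3/2 − (x₁ + √(x₁² − 4x₁ + 16))/4 satisfies h ≤ x₁ and the indifference equation A(x₁,h) = C(x₁,h), i.e. 1 + 2h = min_{t∈[0,1]} G(x₁,h,t). In particular at x₁ = 1 this gives h = (5 − √13)/4. -/
import Mathlib


/-- Expected final rank in Robbins' problem with 4 observations, first two observations
`x₁, x₂`, third accepted iff `≤ h`, fourth always accepted. -/
noncomputable def G (x₁ x₂ h : ℝ) : ℝ :=
  3/2 + h^2 - h + (2 - x₁ - x₂) * (1 - h) + max (h - x₁) 0 + max (h - x₂) 0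

/-- Optimal expected rank from rejecting the second observation:
`C x₁ x₂ = min_{t ∈ [0,1]} G x₁ x₂ t`. -/
noncomputable def C (x₁ x₂ : ℝ) : ℝ := sInf (G x₁ x₂ '' Set.Icc 0 1)

/-- Expected rank from accepting the second observation `u` given first observation `x`. -/
noncomputable def A (x u : ℝ) : ℝ := 1 + (if x ≤ u then (1:ℝ) else 0) + 2*u

theorem robbins_n4_h2_branch6 :
    (∀ x₁ ∈ Set.Icc ((7 - 3 * Real.sqrt 3)/2) (1:ℝ), ∀ h : ℝ,
      h = 3/2 - (x₁ + Real.sqrt (x₁^2 - 4*x₁ + 16))/4 →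
      h ≤ x₁ ∧ A x₁ h = C x₁ h ∧ 1 + 2*h = C x₁ h) ∧
    3/2 - ((1:ℝ) + Real.sqrt ((1:ℝ)^2 - 4*1 + 16))/4 = (5 - Real.sqrt 13)/4 := by
  constructor
  · rintro x₁ ⟨hxl, hxu⟩ h hh
    set s := Real.sqrt (x₁^2 - 4*x₁ + 16) with hs
    have hs0 : 0 ≤ s := Real.sqrt_nonneg _
    have hs2 : s^2 = x₁^2 - 4*x₁ + 16 := Real.sq_sqrt (by nlinarith [sq_nonneg (x₁ - 2)])
    have hr3 : Real.sqrt 3 ^ 2 = 3 := Real.sq_sqrt (by norm_num)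
    have hr3n : 0 ≤ Real.sqrt 3 := Real.sqrt_nonneg _
    -- x₁ ≥ β₅ > 0.9
    have hx9 : (9:ℝ)/10 ≤ x₁ := by nlinarith
    -- bounds on s
    have hs3 : 3 ≤ s := by nlinarith [sq_nonneg (x₁ - 2)]
    have hs4 : s ≤ 4 := by nlinarith
    -- key quadratic identity
    have hq : 2*h^2 + (x₁ - 6)*h + 5/2 - x₁ = 0 := by
      rw [hh]; linear_combination hs2 / 8
    have hhx : h < x₁ := by rw [hh]; nlinarith
    have hh0 : 0 ≤ h := by rw [hh]; nlinarith
    have hh1 : h ≤ 1 := le_trans hhx.le hxu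
    -- β₅ condition : 2 ≤ 3h + x₁
    have hb1 : 2 ≤ 3*h + x₁ := by
      have key : 2*x₁^2 - 14*x₁ + 11 ≤ 0 := by nlinarith
      rw [hh]; nlinarith [sq_nonneg (x₁ + 10 - 3*s)]
    have hb2 : 3*h + x₁ ≤ 3 := by
      rw [hh]; nlinarith [sq_nonneg (x₁ + 6 - 3*s), sq_nonneg (x₁ - 3)]
    -- value at t = h
    have hGh : G x₁ h h = 1 + 2*h := by
      unfold G
      rw [max_eq_right (by linarith), max_eq_right (by linarith)]
      linear_combination hq
    -- lower bound
    have hlb : ∀ t ∈ Set.Icc (0:ℝ) 1, 1 + 2*h ≤ G x₁ h t := by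
      rintro t ⟨ht0, ht1⟩
      unfold G
      have hm1 : (0:ℝ) ≤ max (t - x₁) 0 := le_max_right _ _
      rcases le_total t h with hth | hth
      · rw [max_eq_right (by linarith : t - h ≤ 0)]
        have hP : (0:ℝ) ≤ (h - t) * (3 - x₁ - 2*h - t) :=
          mul_nonneg (by linarith) (by linarith)
        have key : 3/2 + t^2 - t + (2 - x₁ - h)*(1 - t) - (1 + 2*h)
            = (h - t) * (3 - x₁ - 2*h - t) := by linear_combination hq
        linarith [key, hP, hm1]
      · rw [max_eq_left (by linarith : (0:ℝ) ≤ t - h)]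
        have hP : (0:ℝ) ≤ (t - h) * (t + 2*h + x₁ - 2) :=
          mul_nonneg (by linarith) (by linarith)
        have key : 3/2 + t^2 - t + (2 - x₁ - h)*(1 - t) + (t - h) - (1 + 2*h)
            = (t - h) * (t + 2*h + x₁ - 2) := by linear_combination hq
        linarith [key, hP, hm1]
    have hC : C x₁ h = 1 + 2*h := by
      apply IsLeast.csInf_eq
      constructor
      · exact ⟨h, ⟨hh0, hh1⟩, hGh⟩
      · rintro y ⟨t, ht, rfl⟩
        exact hlb t ht
    refine ⟨hhx.le, ?_, hC.symm⟩
    unfold A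
    rw [if_neg (by linarith), hC]
    ring
  · have h13 : Real.sqrt ((1:ℝ)^2 - 4*1 + 16) = Real.sqrt 13 := by norm_num
    rw [h13]; ring
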